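/- arXiv:1711.04888 — 2 statements merged into one kernel-verified Lean document; each statement's English description precedes it below -/
import Mathlib

section
/- Let u > 0 be the landscape function solving -Δu + Vu = 1, W = 1/u the effective potential, and define Lφ = -u^{-2} div(u^2 ∇φ). Then for every φ ∈ H^1(Ω), the identity (-Δ + V)(uφ) = u·(Lφ + Wφ) holds in H^{-1}(Ω). -/
open MeasureTheory

noncomputable section

/-- The `i`-th coordinate unit vector in `ℝⁿ`. -/
def eVec (n : ℕ) (i : Fin n) : EuclideanSpace ℝ (Fin n) := EuclideanSpace.single i 1

/-- Periodicity with respect to the unit lattice `ℤⁿ` (torus boundary conditions). -/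
def per {n : ℕ} (f : EuclideanSpace ℝ (Fin n) → ℝ) : Prop :=
  ∀ (x : EuclideanSpace ℝ (Fin n)) (i : Fin n), f (x + eVec n i) = f x

/-- A fundamental domain `Q = [0,1)ⁿ` of the torus. -/
def Qd (n : ℕ) : Set (EuclideanSpace ℝ (Fin n)) :=
  {x | ∀ i, x i ∈ Set.Ico (0:ℝ) 1}

/-- The Laplacian `Δf = ∑ᵢ ∂²f/∂xᵢ²`. -/
def lap {n : ℕ} (f : EuclideanSpace ℝ (Fin n) → ℝ) (x : EuclideanSpace ℝ (Fin n)) : ℝ :=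
  ∑ i, fderiv ℝ (fun y => fderiv ℝ f y (eVec n i)) x (eVec n i)

/-!
Pointwise, for `C²` functions this is the computation
`Δ(uφ) = u Δφ + 2 ∇u·∇φ + φ Δu` and `div(u² ∇φ) = u² Δφ + 2u ∇u·∇φ`, so
`(-Δ + V)(uφ) = -u⁻¹ div(u² ∇φ) + φ (-Δu + Vu)`, and the landscape equation `-Δu + Vu = 1`
turns the last term into `u · Wφ` with `W = 1/u`.
-/

section DirectionalDerivatives

variable {𝕜 E : Type*} [NontriviallyNormedField 𝕜] [NormedAddCommGroup E] [NormedSpace 𝕜 E]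
  {f g : E → 𝕜}

theorem fderiv_fun_mul_apply {x : E} (hf : DifferentiableAt 𝕜 f x)
    (hg : DifferentiableAt 𝕜 g x) (e : E) :
    fderiv 𝕜 (fun y => f y * g y) x e = f x * fderiv 𝕜 g x e + g x * fderiv 𝕜 f x e := by
  simp [fderiv_fun_mul hf hg]

theorem ContDiff.differentiable_fderiv_apply (hf : ContDiff 𝕜 2 f) (e : E) :
    Differentiable 𝕜 (fun y => fderiv 𝕜 f y e) :=
  ((hf.fderiv_right (m := 1) (by norm_num)).clm_apply contDiff_const).differentiable one_ne_zero

theorem fderiv_fderiv_mul_apply (hf : ContDiff 𝕜 2 f) (hg : ContDiff 𝕜 2 g) (e x : E) :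
    fderiv 𝕜 (fun y => fderiv 𝕜 (fun z => f z * g z) y e) x e
      = f x * fderiv 𝕜 (fun y => fderiv 𝕜 g y e) x e
        + g x * fderiv 𝕜 (fun y => fderiv 𝕜 f y e) x e
        + 2 * (fderiv 𝕜 f x e * fderiv 𝕜 g x e) := by
  have hf₁ := hf.differentiable two_ne_zero
  have hg₁ := hg.differentiable two_ne_zero
  have hf₂ := hf.differentiable_fderiv_apply e
  have hg₂ := hg.differentiable_fderiv_apply e
  have first_derivative : (fun y => fderiv 𝕜 (fun z => f z * g z) y e)
      = fun y => f y * fderiv 𝕜 g y e + g y * fderiv 𝕜 f y e :=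
    funext fun y => fderiv_fun_mul_apply (hf₁ y) (hg₁ y) e
  rw [first_derivative, fderiv_fun_add ((hf₁ x).fun_mul (hg₂ x)) ((hg₁ x).fun_mul (hf₂ x)),
    add_apply, fderiv_fun_mul_apply (hf₁ x) (hg₂ x),
    fderiv_fun_mul_apply (hg₁ x) (hf₂ x)]
  ring

theorem fderiv_sq_mul_fderiv_apply (hf : ContDiff 𝕜 2 f) (hg : ContDiff 𝕜 2 g) (e x : E) :
    fderiv 𝕜 (fun y => f y ^ 2 * fderiv 𝕜 g y e) x e
      = f x ^ 2 * fderiv 𝕜 (fun y => fderiv 𝕜 g y e) x e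
        + 2 * f x * (fderiv 𝕜 f x e * fderiv 𝕜 g x e) := by
  have hf₁ := hf.differentiable two_ne_zero
  rw [fderiv_fun_mul_apply ((hf₁ x).fun_pow 2) (hg.differentiable_fderiv_apply e x),
    fderiv_fun_pow 2 (hf₁ x)]
  simp only [smul_apply, nsmul_eq_mul, smul_eq_mul]
  ring

end DirectionalDerivatives

section Laplacian

variable {n : ℕ} {f g : EuclideanSpace ℝ (Fin n) → ℝ}

theorem lap_mul (hf : ContDiff ℝ 2 f) (hg : ContDiff ℝ 2 g) (x : EuclideanSpace ℝ (Fin n)) :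
    lap (fun y => f y * g y) x
      = f x * lap g x + g x * lap f x
        + 2 * ∑ i, fderiv ℝ f x (eVec n i) * fderiv ℝ g x (eVec n i) := by
  simp only [lap, fderiv_fderiv_mul_apply hf hg, Finset.sum_add_distrib, Finset.mul_sum]

theorem sum_fderiv_sq_mul_fderiv (hf : ContDiff ℝ 2 f) (hg : ContDiff ℝ 2 g)
    (x : EuclideanSpace ℝ (Fin n)) :
    ∑ i, fderiv ℝ (fun y => f y ^ 2 * fderiv ℝ g y (eVec n i)) x (eVec n i)
      = f x ^ 2 * lap g x
        + 2 * f x * ∑ i, fderiv ℝ f x (eVec n i) * fderiv ℝ g x (eVec n i) := by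
  simp only [lap, fderiv_sq_mul_fderiv_apply hf hg, Finset.sum_add_distrib, Finset.mul_sum]

end Laplacian

theorem effective_potential_identity_general (n : ℕ)
    (V u φ : EuclideanSpace ℝ (Fin n) → ℝ)
    (hu2 : ContDiff ℝ 2 u) (hupos : ∀ x, 0 < u x)
    (hu : ∀ x, -lap u x + V x * u x = 1)
    (hφ2 : ContDiff ℝ 2 φ) :
    ∀ x, -lap (fun y => u y * φ y) x + V x * (u x * φ x)
      = u x * ((-(1/(u x)^2) *
          ∑ i, fderiv ℝ (fun y => (u y)^2 * fderiv ℝ φ y (eVec n i)) x (eVec n i))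
        + (1 / u x) * φ x) := by
  intro x
  have hux : u x ≠ 0 := (hupos x).ne'
  rw [lap_mul hu2 hφ2, sum_fderiv_sq_mul_fderiv hu2 hφ2]
  field_simp
  linear_combination φ x * hu x

/-- the fundamental identity `(-Δ + V)(uφ) = u (Lφ + Wφ)`,
where `W = 1/u` and `Lφ = -(1/u²) div(u² ∇φ)`. -/
theorem effective_potential_identity (n : ℕ)
    (V u φ : EuclideanSpace ℝ (Fin n) → ℝ)
    (hVmeas : Measurable V) (hVbdd : ∃ M, ∀ x, |V x| ≤ M)
    (hVnonneg : ∀ x, 0 ≤ V x) (hVper : per V)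
    (hVpos : 0 < volume {x | x ∈ Qd n ∧ 0 < V x})
    (hu2 : ContDiff ℝ 2 u) (huper : per u) (hupos : ∀ x, 0 < u x)
    (hu : ∀ x, -lap u x + V x * u x = 1)
    (hφ2 : ContDiff ℝ 2 φ) :
    ∀ x, -lap (fun y => u y * φ y) x + V x * (u x * φ x)
      = u x * ((-(1/(u x)^2) *
          ∑ i, fderiv ℝ (fun y => (u y)^2 * fderiv ℝ φ y (eVec n i)) x (eVec n i))
        + (1 / u x) * φ x) :=
  effective_potential_identity_general n V u φ hu2 hupos hu hφ2
end
end

section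
/- For any eigenpair (ψ, λ) of H = -Δ + V on the torus with ‖ψ‖_{L^2} = 1, writing φ = ψ/u, the energy decomposition λ = ∫_Ω u^2 |∇φ|^2 dx + ∫_Ω W ψ^2 dx holds, where u is the landscape function and W = 1/u. -/
open MeasureTheory

noncomputable section

/-! Write `ψ = u φ`. Since `|∇ψ|² - ∇(u φ²) · ∇u = u² |∇φ|²`, the field `ψ ∇ψ - (ψ²/u) ∇u` has
divergence `u² |∇φ|² + ψ Δψ - (ψ²/u) Δu`, and the two equations turn the last two terms into
`ψ²/u - λ ψ²`. A periodic field has zero divergence integral over the fundamental cell (the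
divergence theorem, with opposite faces cancelling), so integrating and using `∫ ψ² = 1` gives
the decomposition. -/

section GroundState

variable {E : Type*} [NormedAddCommGroup E] [NormedSpace ℝ E]

theorem ContDiff.fderiv_right_apply {f : E → ℝ} (hf : ContDiff ℝ 2 f) (v : E) :
    ContDiff ℝ 1 fun z => fderiv ℝ f z v :=
  (hf.fderiv_right le_rfl).clm_apply contDiff_const

def groundStateFlux (ψ u : E → ℝ) (v z : E) : ℝ :=
  ψ z * fderiv ℝ ψ z v - ψ z ^ 2 / u z * fderiv ℝ u z v

variable {ψ u : E → ℝ}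

theorem groundStateFlux_eq (hu0 : ∀ z, u z ≠ 0) (v : E) :
    groundStateFlux ψ u v
      = fun z => ψ z * fderiv ℝ ψ z v - u z * (ψ z / u z) ^ 2 * fderiv ℝ u z v := by
  funext z
  rw [groundStateFlux, div_pow, mul_div_assoc', sq (u z), mul_div_mul_left _ _ (hu0 z)]

theorem contDiff_groundStateFlux (hψ : ContDiff ℝ 2 ψ) (hu : ContDiff ℝ 2 u) (hu0 : ∀ z, u z ≠ 0)
    (v : E) : ContDiff ℝ 1 (groundStateFlux ψ u v) := by
  rw [groundStateFlux_eq hu0]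
  exact ((hψ.of_le one_le_two).mul (hψ.fderiv_right_apply v)).sub
    (((hu.of_le one_le_two).mul (((hψ.div hu hu0).of_le one_le_two).pow 2)).mul
      (hu.fderiv_right_apply v))

theorem fderiv_groundStateFlux_apply (hψ : ContDiff ℝ 2 ψ) (hu : ContDiff ℝ 2 u)
    (hu0 : ∀ z, u z ≠ 0) (v x : E) :
    fderiv ℝ (groundStateFlux ψ u v) x v =
      u x ^ 2 * fderiv ℝ (fun z => ψ z / u z) x v ^ 2
        + ψ x * fderiv ℝ (fun z => fderiv ℝ ψ z v) x v
        - ψ x ^ 2 / u x * fderiv ℝ (fun z => fderiv ℝ u z v) x v := by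
  rw [groundStateFlux_eq hu0]
  set φ := fun z => ψ z / u z
  have hψuφ : ψ = fun z => u z * φ z := funext fun z => (mul_div_cancel₀ _ (hu0 z)).symm
  have hψx := hψ.differentiable two_ne_zero x
  have hux := hu.differentiable two_ne_zero x
  have hφx : DifferentiableAt ℝ φ x := (hψ.div hu hu0).differentiable two_ne_zero x
  have hψ'x := (hψ.fderiv_right_apply v).differentiable one_ne_zero x
  have hu'x := (hu.fderiv_right_apply v).differentiable one_ne_zero x
  have hψ' : fderiv ℝ ψ x v = u x * fderiv ℝ φ x v + φ x * fderiv ℝ u x v := by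
    rw [hψuφ, fderiv_fun_mul hux hφx]
    simp only [add_apply, smul_apply, smul_eq_mul]
  rw [fderiv_fun_sub (hψx.fun_mul hψ'x) ((hux.fun_mul (hφx.fun_pow 2)).fun_mul hu'x),
    fderiv_fun_mul hψx hψ'x, fderiv_fun_mul (hux.fun_mul (hφx.fun_pow 2)) hu'x,
    fderiv_fun_mul hux (hφx.fun_pow 2), fderiv_fun_pow 2 hφx]
  simp only [sub_apply, add_apply, smul_apply, smul_eq_mul, hψ']
  rw [hψuφ]
  field_simp [hu0 x]
  ring

end GroundState

open Set

theorem integral_Icc_sum_fderiv_single_eq_zero {m : ℕ} (F : Fin (m + 1) → (Fin (m + 1) → ℝ) → ℝ)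
    (hF : ∀ i, ContDiff ℝ 1 (F i)) (hper : ∀ i y, F i (y + Pi.single i 1) = F i y) :
    ∫ y in Icc (0 : Fin (m + 1) → ℝ) 1, ∑ i, fderiv ℝ (F i) y (Pi.single i 1) = 0 := by
  have hint : IntegrableOn (fun y => ∑ i, fderiv ℝ (F i) y (Pi.single i 1)) (Icc 0 1) :=
    (continuous_finsetSum _ fun i _ =>
      ((hF i).continuous_fderiv one_ne_zero).clm_apply continuous_const).continuousOn
      |>.integrableOn_compact isCompact_Icc
  rw [integral_divergence_of_hasFDerivAt_off_countable' 0 1 zero_le_one F (fun i => fderiv ℝ (F i))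
    ∅ countable_empty (fun i => (hF i).continuous.continuousOn)
    (fun y _ i => ((hF i).differentiable one_ne_zero y).hasFDerivAt) hint]
  refine Finset.sum_eq_zero fun i _ => ?_
  have hfaces : ∀ x : Fin m → ℝ, (Fin.insertNth i (1 : ℝ) x : Fin (m + 1) → ℝ)
      = Fin.insertNth i 0 x + Pi.single i 1 := by
    intro x
    funext k
    refine Fin.succAboveCases i ?_ (fun l => ?_) k <;> simp
  simp only [Pi.one_apply, Pi.zero_apply, hfaces, hper, sub_self]

theorem integral_Qd_sum_fderiv_eq_zero {n : ℕ} (F : Fin n → EuclideanSpace ℝ (Fin n) → ℝ)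
    (hF : ∀ i, ContDiff ℝ 1 (F i)) (hper : ∀ i x, F i (x + eVec n i) = F i x) :
    ∫ x in Qd n, ∑ i, fderiv ℝ (F i) x (eVec n i) = 0 := by
  obtain _ | m := n
  · simp
  set e := (PiLp.continuousLinearEquiv 2 ℝ fun _ : Fin (m + 1) => ℝ).symm
  have hpre : e ⁻¹' Qd (m + 1) = univ.pi fun _ => Ico 0 1 := by
    ext y
    simp [Qd, e]
  have hfderiv : ∀ i y, fderiv ℝ (F i ∘ e) y (Pi.single i 1) = fderiv ℝ (F i) (e y) (eVec _ i) :=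
    fun i y => by rw [e.comp_right_fderiv]; rfl
  rw [← (PiLp.volume_preserving_toLp (Fin (m + 1))).setIntegral_preimage_emb
      (MeasurableEquiv.toLp 2 _).measurableEmbedding]
  change ∫ y in e ⁻¹' Qd (m + 1), _ = 0
  rw [hpre, setIntegral_congr_set (by rw [volume_pi]; exact Measure.univ_pi_Ico_ae_eq_Icc)]
  refine (setIntegral_congr_fun measurableSet_Icc fun y _ =>
    Finset.sum_congr rfl fun i _ => (hfderiv i y).symm).trans ?_
  exact integral_Icc_sum_fderiv_single_eq_zero (fun i => F i ∘ e)
    (fun i => (hF i).comp e.contDiff) fun i y => (congrArg (F i) (map_add e y _)).trans (hper i (e y))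

theorem Continuous.integrableOn_Qd {n : ℕ} {E : Type*} [NormedAddCommGroup E]
    {f : EuclideanSpace ℝ (Fin n) → E} (hf : Continuous f) : IntegrableOn f (Qd n) := by
  have hK : IsCompact ((PiLp.continuousLinearEquiv 2 ℝ fun _ : Fin n => ℝ) ⁻¹' Icc 0 1) :=
    (PiLp.continuousLinearEquiv 2 ℝ _).toHomeomorph.isCompact_preimage.2 isCompact_Icc
  exact (hf.continuousOn.integrableOn_compact hK).mono_set
    fun x hx => ⟨fun i => (hx i).1, fun i => (hx i).2.le⟩

section Torus

variable {n : ℕ} {ψ u : EuclideanSpace ℝ (Fin n) → ℝ}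

theorem per.fderiv_add_eVec {f : EuclideanSpace ℝ (Fin n) → ℝ} (hf : per f)
    (x : EuclideanSpace ℝ (Fin n)) (i : Fin n) : fderiv ℝ f (x + eVec n i) = fderiv ℝ f x := by
  rw [← fderiv_comp_add_right]
  exact congrArg (fderiv ℝ · x) (funext fun y => hf y i)

theorem per.groundStateFlux (hψ : per ψ) (hu : per u) (v : EuclideanSpace ℝ (Fin n)) :
    per (groundStateFlux ψ u v) := fun x i => by
  simp only [_root_.groundStateFlux, hψ x i, hu x i, hψ.fderiv_add_eVec, hu.fderiv_add_eVec]

theorem sum_fderiv_groundStateFlux_eVec (hψ : ContDiff ℝ 2 ψ) (hu : ContDiff ℝ 2 u)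
    (hu0 : ∀ z, u z ≠ 0) (x : EuclideanSpace ℝ (Fin n)) :
    ∑ i, fderiv ℝ (groundStateFlux ψ u (eVec n i)) x (eVec n i)
      = u x ^ 2 * ∑ i, fderiv ℝ (fun z => ψ z / u z) x (eVec n i) ^ 2
        + ψ x * lap ψ x - ψ x ^ 2 / u x * lap u x := by
  simp only [fderiv_groundStateFlux_apply hψ hu hu0, Finset.sum_sub_distrib,
    Finset.sum_add_distrib, ← Finset.mul_sum, lap]

end Torus

theorem energy_decomposition_general (n : ℕ)
    (V u ψ : EuclideanSpace ℝ (Fin n) → ℝ) (lam : ℝ)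
    (hu2 : ContDiff ℝ 2 u) (huper : per u) (hupos : ∀ x, 0 < u x)
    (hu : ∀ x, -lap u x + V x * u x = 1)
    (hψ2 : ContDiff ℝ 2 ψ) (hψper : per ψ)
    (hψ : ∀ x, -lap ψ x + V x * ψ x = lam * ψ x)
    (hnorm : (∫ x in Qd n, (ψ x)^2) = 1) :
    lam = (∫ x in Qd n,
            (u x)^2 * ∑ i, (fderiv ℝ (fun z => ψ z / u z) x (eVec n i))^2)
          + (∫ x in Qd n, (1 / u x) * (ψ x)^2) := by
  have hu0 : ∀ x, u x ≠ 0 := fun x => (hupos x).ne'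
  have hdiv : ∀ x, ∑ i, fderiv ℝ (groundStateFlux ψ u (eVec n i)) x (eVec n i)
      = u x ^ 2 * ∑ i, fderiv ℝ (fun z => ψ z / u z) x (eVec n i) ^ 2 + 1 / u x * ψ x ^ 2
        - lam * ψ x ^ 2 := fun x => by
    rw [sum_fderiv_groundStateFlux_eVec hψ2 hu2 hu0, show lap ψ x = V x * ψ x - lam * ψ x by
      linarith [hψ x], show lap u x = V x * u x - 1 by linarith [hu x]]
    field_simp [hu0 x]
    ring
  have hzero := integral_Qd_sum_fderiv_eq_zero (fun i => groundStateFlux ψ u (eVec n i))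
    (fun i => contDiff_groundStateFlux hψ2 hu2 hu0 _) fun i x => hψper.groundStateFlux huper _ x i
  have hgrad : IntegrableOn
      (fun x => u x ^ 2 * ∑ i, fderiv ℝ (fun z => ψ z / u z) x (eVec n i) ^ 2) (Qd n) :=
    ((hu2.continuous.pow 2).mul (continuous_finsetSum _ fun i _ =>
      (((hψ2.div hu2 hu0).continuous_fderiv two_ne_zero).clm_apply continuous_const).pow 2))
      |>.integrableOn_Qd
  have hW : IntegrableOn (fun x => 1 / u x * ψ x ^ 2) (Qd n) :=
    ((continuous_const.div hu2.continuous hu0).mul (hψ2.continuous.pow 2)).integrableOn_Qd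
  have hL2 : IntegrableOn (fun x => lam * ψ x ^ 2) (Qd n) :=
    (continuous_const.mul (hψ2.continuous.pow 2)).integrableOn_Qd
  rw [funext hdiv, integral_sub (hgrad.fun_add hW) hL2, integral_add hgrad hW, integral_const_mul,
    hnorm] at hzero
  linarith

/-- the energy decomposition
`λ = ∫ u² |∇φ|² + ∫ W ψ²` for a normalized eigenpair, with `φ = ψ/u`, `W = 1/u`. -/
theorem energy_decomposition (n : ℕ)
    (V u ψ : EuclideanSpace ℝ (Fin n) → ℝ) (lam : ℝ)
    (hVmeas : Measurable V) (hVbdd : ∃ M, ∀ x, |V x| ≤ M)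
    (hVnonneg : ∀ x, 0 ≤ V x) (hVper : per V)
    (hVpos : 0 < volume {x | x ∈ Qd n ∧ 0 < V x})
    (hu2 : ContDiff ℝ 2 u) (huper : per u) (hupos : ∀ x, 0 < u x)
    (hu : ∀ x, -lap u x + V x * u x = 1)
    (hψ2 : ContDiff ℝ 2 ψ) (hψper : per ψ)
    (hψ : ∀ x, -lap ψ x + V x * ψ x = lam * ψ x)
    (hnorm : (∫ x in Qd n, (ψ x)^2) = 1) :
    lam = (∫ x in Qd n,
            (u x)^2 * ∑ i, (fderiv ℝ (fun z => ψ z / u z) x (eVec n i))^2)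
          + (∫ x in Qd n, (1 / u x) * (ψ x)^2) :=
  energy_decomposition_general n V u ψ lam hu2 huper hupos hu hψ2 hψper hψ hnorm
end
end
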